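/- Let b be a formal iterated bracket and let S be a subbracket of b. Then the number of differentiations 𝔡(S; b) equals the number of right (closing) brackets occurring in b to the right of S minus the number of left (opening) brackets occurring in b to the right of S. -/

import Mathlib

open MeasureTheory Set Filter Asymptotics Topology
noncomputable section

/-- Formal iterated brackets, built from variables `X j` (`j ∈ ℕ`) and the binary
bracket operation. -/
inductive FormalBracket : Type
  | var : ℕ → FormalBracket
  | br : FormalBracket → FormalBracket → FormalBracket
deriving DecidableEq

namespace FormalBracket

/-- The length of a bracket: the number of variable occurrences. -/
def lengthB : FormalBracket → ℕ
  | var _ => 1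
  | br b₁ b₂ => lengthB b₁ + lengthB b₂

/-- `Seq(b)`: the ordered list of variable indices occurring in `b`. -/
def varsB : FormalBracket → List ℕ
  | var j => [j]
  | br b₁ b₂ => varsB b₁ ++ varsB b₂

/-- `S` is a subbracket of `b` (a substring of `b` which is itself a bracket). -/
def isSub (S : FormalBracket) : FormalBracket → Bool
  | var j => S = var j
  | br b₁ b₂ => S = br b₁ b₂ || isSub S b₁ || isSub S b₂

/-- The number of differentiations `𝔡(S; b)` of a subbracket `S` in `b`, defined by the
backward recursion `𝔡(b; b) = 0`, `𝔡(S₁; b) = 𝔡(S₂; b) = 1 + 𝔡([S₁,S₂]; b)`. -/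
def diffCount (S : FormalBracket) : FormalBracket → ℕ
  | var _ => 0
  | br b₁ b₂ =>
    if S = br b₁ b₂ then 0
    else if isSub S b₁ then 1 + diffCount S b₁
    else 1 + diffCount S b₂

end FormalBracket

/-- The tokens making up the word of a bracket: left parenthesis `[`, right
parenthesis `]`, comma, and variables. -/
inductive Token : Type
  | lb | rb | comma
  | tvar : ℕ → Token
deriving DecidableEq

/-- The word (string of tokens) associated to a formal bracket. -/
def toWord : FormalBracket → List Token
  | .var j => [.tvar j]
  | .br b₁ b₂ => [.lb] ++ toWord b₁ ++ [.comma] ++ toWord b₂ ++ [.rb]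

/-
A subbracket `S` of `b` is reached from `b` along the chain of enclosing brackets that defines
`𝔡(S; b)`, each adding one differentiation. To the right of `S`, each of them adds its closing
bracket and, when `S` lies in its left factor, the complete (hence balanced) word of its right
factor; so the occurrence of `S` found along this chain satisfies the formula. When the variables
of `b` are distinct, a variable of `S` occurs only once in the word of `b`, which pins down the
occurrence of `S`.
-/

namespace List

theorem append_append_eq_of_count_le_one {α : Type*} [BEq α] [LawfulBEq α]
    {l a a' w c c' : List α} {x : α} (hx : x ∈ w) (hl : l.count x ≤ 1)
    (h : a ++ w ++ c = l) (h' : a' ++ w ++ c' = l) : a = a' ∧ c = c' := by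
  have notMem {p s : List α} (hp : p ++ w ++ s = l) : x ∉ p := by
    have := count_pos_iff.mpr hx
    rw [← count_eq_zero]
    subst hp
    simp only [count_append] at hl
    omega
  have idxOf_eq {p s : List α} (hp : p ++ w ++ s = l) : l.idxOf x = p.length + w.idxOf x := by
    rw [← hp, append_assoc, idxOf_append_of_notMem (notMem hp), idxOf_append_of_mem hx]
  obtain ⟨rfl, hwc⟩ := append_inj (by simpa using h.trans h'.symm)
    (by have := (idxOf_eq h).symm.trans (idxOf_eq h'); omega)
  exact ⟨rfl, append_cancel_left hwc⟩

end List

namespace Token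

def excess (w : List Token) : ℤ :=
  (w.countP (fun t => t = rb) : ℤ) - (w.countP (fun t => t = lb) : ℤ)

@[simp]
theorem excess_nil : excess [] = 0 := rfl

@[simp]
theorem excess_cons (t : Token) (w : List Token) :
    excess (t :: w) = (if t = rb then 1 else 0) - (if t = lb then 1 else 0) + excess w := by
  by_cases h₁ : t = rb <;> by_cases h₂ : t = lb <;> simp [excess, h₁, h₂] <;> ring

@[simp]
theorem excess_append (v w : List Token) : excess (v ++ w) = excess v + excess w := by
  simp only [excess, List.countP_append]
  push_cast
  ring

end Token

namespace FormalBracket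

open Token

@[simp]
theorem excess_toWord (b : FormalBracket) : excess (toWord b) = 0 := by
  induction b with
  | var => simp [toWord]
  | br b₁ b₂ ih₁ ih₂ => simp [toWord, ih₁, ih₂]

theorem count_tvar_toWord (b : FormalBracket) (j : ℕ) :
    (toWord b).count (tvar j) = b.varsB.count j := by
  induction b with
  | var i => simp [toWord, varsB, List.count_singleton]
  | br b₁ b₂ ih₁ ih₂ => simp [toWord, varsB, ih₁, ih₂]

theorem varsB_ne_nil (b : FormalBracket) : b.varsB ≠ [] := by
  induction b with
  | var j => simp [varsB]
  | br b₁ b₂ ih₁ _ => simp [varsB, ih₁]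

theorem diffCount_br_of_isSub_left {S b₁ b₂ : FormalBracket} (hS : S ≠ br b₁ b₂)
    (h₁ : S.isSub b₁ = true) : diffCount S (br b₁ b₂) = 1 + diffCount S b₁ := by
  simp [diffCount, hS, h₁]

theorem diffCount_br_of_isSub_right {S b₁ b₂ : FormalBracket} (hS : S ≠ br b₁ b₂)
    (h₁ : S.isSub b₁ = false) : diffCount S (br b₁ b₂) = 1 + diffCount S b₂ := by
  simp [diffCount, hS, h₁]

theorem exists_toWord_eq_append_and_diffCount_eq_excess {S b : FormalBracket}
    (hsub : S.isSub b = true) :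
    ∃ pre suf : List Token,
      toWord b = pre ++ toWord S ++ suf ∧ (diffCount S b : ℤ) = excess suf := by
  induction b with
  | var j =>
    obtain rfl : S = var j := by simpa [isSub] using hsub
    exact ⟨[], [], by simp, by simp [diffCount]⟩
  | br b₁ b₂ ih₁ ih₂ =>
    by_cases hS : S = br b₁ b₂
    · exact ⟨[], [], by simp [hS], by simp [hS, diffCount]⟩
    cases h₁ : S.isSub b₁
    · obtain ⟨pre, suf, hw, hd⟩ := ih₂ (by simpa [isSub, hS, h₁] using hsub)
      refine ⟨[lb] ++ toWord b₁ ++ [comma] ++ pre, suf ++ [rb], by simp [toWord, hw], ?_⟩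
      simp [diffCount_br_of_isSub_right hS h₁, hd, add_comm]
    · obtain ⟨pre, suf, hw, hd⟩ := ih₁ h₁
      refine ⟨[lb] ++ pre, suf ++ [comma] ++ toWord b₂ ++ [rb], by simp [toWord, hw], ?_⟩
      simp [diffCount_br_of_isSub_left hS h₁, hd, add_comm]

theorem toWord_eq_append_unique {S b : FormalBracket} (hb : b.varsB.Nodup)
    {pre suf pre' suf' : List Token} (h : toWord b = pre ++ toWord S ++ suf)
    (h' : toWord b = pre' ++ toWord S ++ suf') : pre = pre' ∧ suf = suf' := by
  obtain ⟨j, hj⟩ := List.exists_mem_of_ne_nil _ S.varsB_ne_nil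
  have hjS : tvar j ∈ toWord S := by
    rw [← List.count_pos_iff, count_tvar_toWord]
    exact List.count_pos_iff.mpr hj
  have hjb : (toWord b).count (tvar j) ≤ 1 := by
    rw [count_tvar_toWord]
    exact List.nodup_iff_count_le_one.mp hb j
  exact List.append_append_eq_of_count_le_one hjS hjb h.symm h'.symm

end FormalBracket

/-- If `S` is a subbracket of the formal iterated bracket `b` (whose
variables are the consecutive distinct variables `X_{μ+1} … X_{μ+m}`), then `S` occurs as a
substring of the word of `b`, and for any such occurrence `toWord b = pre ++ toWord S ++ suf`,
the number of differentiations `𝔡(S; b)` equals the number of right parentheses occurring to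
the right of `S` minus the number of left parentheses occurring to the right of `S`. -/
theorem diffCount_eq_right_minus_left_brackets (b S : FormalBracket)
    (hvalid : ∃ μ : ℕ, b.varsB = List.range' (μ + 1) b.lengthB)
    (hsub : S.isSub b = true) :
    (∃ pre suf : List Token, toWord b = pre ++ toWord S ++ suf) ∧
    (∀ pre suf : List Token, toWord b = pre ++ toWord S ++ suf →
      (FormalBracket.diffCount S b : ℤ)
        = (suf.countP (fun t => t = Token.rb) : ℤ)
          - (suf.countP (fun t => t = Token.lb) : ℤ)) := by
  obtain ⟨μ, hv⟩ := hvalid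
  have hnodup : b.varsB.Nodup := hv ▸ List.nodup_range' _
  obtain ⟨pre₀, suf₀, hw₀, hd₀⟩ :=
    FormalBracket.exists_toWord_eq_append_and_diffCount_eq_excess hsub
  refine ⟨⟨pre₀, suf₀, hw₀⟩, fun pre suf hw => ?_⟩
  obtain ⟨-, rfl⟩ := FormalBracket.toWord_eq_append_unique hnodup hw₀ hw
  exact hd₀
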